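/- (Pointwise cleaning criterion) Let Λ ⊆ X and (hₙ)_{n≥1} functions with 0 ≤ hₙ ≤ χ_Λ, and let μₙ := β_{h₁} * ⋯ * β_{hₙ} (cloud convolution). Then μₙ converges pointwise (markerwise) to π_Λ if and only if Σ_{n=1}^∞ hₙ(x) = ∞ for every x ∈ Λ, where π_Λ is the indicator cloud of ∂Λ, the set of markers (x₀,…,x_k) with x₀,…,x_{k-1} ∈ Λ and x_k ∉ Λ. -/

import Mathlib

open scoped ENNReal

/-- Convolution of clouds (real functions on markers, i.e. nonempty lists). -/
def cloudConv {X : Type*} (μ ν : List X → ℝ) : List X → ℝ :=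
  fun η => ∑ j ∈ Finset.range η.length, μ (η.take (j + 1)) * ν (η.drop j)

/-- The cloud `β_h`: value `1 - h(x₀)` on level-0 markers `(x₀)`, value `h(x₀)`
on level-1 markers `(x₀,x₁)`, and `0` on higher levels. -/
def cloudBeta {X : Type*} (h : X → ℝ) : List X → ℝ
  | [x] => 1 - h x
  | [x, _] => h x
  | _ => 0

/-- The cloud `I_f`: value `f(x₀)` on level-0 markers, `0` elsewhere. -/
def cloudI {X : Type*} (f : X → ℝ) : List X → ℝ
  | [x] => f x
  | _ => 0

/-- The convolution product `ν₁ * ⋯ * νₙ` (empty product = `ρ⁰ = I_1`). -/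
def cloudProd {X : Type*} {n : ℕ} (νs : Fin n → List X → ℝ) : List X → ℝ :=
  (List.ofFn νs).foldr cloudConv (cloudI fun _ => 1)

open Classical in
/-- `π_Λ`, the indicator cloud of `∂Λ`: markers `(x₀,…,x_k)` with
`x₀,…,x_{k-1} ∈ Λ` and `x_k ∉ Λ`. -/
noncomputable def cloudPi {X : Type*} (Λ : Set X) : List X → ℝ :=
  fun η => if (∀ x ∈ η.dropLast, x ∈ Λ) ∧ (∀ x ∈ η.getLast?, x ∉ Λ) then 1 else 0

/-!
For a fixed marker `η` and a prefix `ξ` of `η`, `μₙ(ξ)` is the probability that after `n` steps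
a walker along `η` sits at `ξ`, when at step `j` it advances from a prefix ending in `z` to the
next one with probability `h j z`. So the mass `u n` of a prefix `ξ ++ [z]` obeys
`u (n+1) = (1 - h n z) u n + (inflow)`, and mass plus outflow is conserved.

If `∑ₙ hₙ(x) = ∞` on `Λ`, induction along `η` shows that every prefix inside `Λ` drains to `0`
while passing on a total mass `1`; the first letter outside `Λ` is absorbing (`h = 0` there), so
the boundary marker collects mass `1`, and markers beyond it are never reached.

If `∑ₙ hₙ(x) = H < ∞` for some `x ∈ Λ`, the walker along `(x, x, …)` makes at most `H` jumps on
average, so by Markov's inequality the markers `(x, …, x)` of length at most `2H + 1` keep total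
mass at least `1/2` forever, and they cannot all tend to `π_Λ = 0`.
-/

open Filter Finset

section RealSequences

theorem tendsto_prod_range_one_sub_of_not_summable {b : ℕ → ℝ} (hb0 : ∀ n, 0 ≤ b n)
    (hb1 : ∀ n, b n ≤ 1) (hb : ¬ Summable b) :
    Tendsto (fun n => ∏ j ∈ range n, (1 - b j)) atTop (nhds 0) := by
  have hsum := (not_summable_iff_tendsto_nat_atTop_of_nonneg hb0).1 hb
  refine squeeze_zero (fun n => prod_nonneg fun j _ => sub_nonneg.2 (hb1 j)) (fun n => ?_)
    (Real.tendsto_exp_atBot.comp (tendsto_neg_atTop_atBot.comp hsum))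
  calc ∏ j ∈ range n, (1 - b j) ≤ ∏ j ∈ range n, Real.exp (-b j) :=
        prod_le_prod (fun j _ => sub_nonneg.2 (hb1 j)) fun j _ => Real.one_sub_le_exp_neg _
    _ = Real.exp (-∑ j ∈ range n, b j) := by rw [← Real.exp_sum, sum_neg_distrib]

theorem le_prod_one_sub_mul_add_sum {u a b : ℕ → ℝ} (ha : ∀ n, 0 ≤ a n) (hb0 : ∀ n, 0 ≤ b n)
    (hb1 : ∀ n, b n ≤ 1) (hu : ∀ n, u (n + 1) ≤ (1 - b n) * u n + a n) (n : ℕ) :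
    u n ≤ u 0 * ∏ j ∈ range n, (1 - b j) + ∑ j ∈ range n, a j := by
  induction n with
  | zero => simp
  | succ n ih =>
    have hsum : 0 ≤ b n * ∑ j ∈ range n, a j := mul_nonneg (hb0 n) (sum_nonneg fun j _ => ha j)
    calc u (n + 1) ≤ (1 - b n) * u n + a n := hu n
      _ ≤ (1 - b n) * (u 0 * ∏ j ∈ range n, (1 - b j) + ∑ j ∈ range n, a j) + a n := by
          gcongr; linarith [hb1 n]
      _ ≤ _ := by rw [prod_range_succ, sum_range_succ]; nlinarith

theorem tendsto_zero_of_le_one_sub_mul_add {u a b : ℕ → ℝ} (hu0 : ∀ n, 0 ≤ u n)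
    (ha : ∀ n, 0 ≤ a n) (hb0 : ∀ n, 0 ≤ b n) (hb1 : ∀ n, b n ≤ 1)
    (hu : ∀ n, u (n + 1) ≤ (1 - b n) * u n + a n) (hsa : Summable a) (hb : ¬ Summable b) :
    Tendsto u atTop (nhds 0) := by
  refine tendsto_order.2 ⟨fun c hc => Eventually.of_forall fun n => hc.trans_le (hu0 n),
    fun ε hε => ?_⟩
  obtain ⟨N, hN⟩ := ((tendsto_order.1 (tendsto_sum_nat_add a)).2 (ε / 2) (by positivity)).exists
  have hdamp : Tendsto (fun m => u N * ∏ j ∈ range m, (1 - b (j + N))) atTop (nhds 0) := by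
    simpa using (tendsto_prod_range_one_sub_of_not_summable (fun j => hb0 (j + N))
      (fun j => hb1 (j + N)) ((summable_nat_add_iff N).not.2 hb)).const_mul (u N)
  obtain ⟨M, hM⟩ := eventually_atTop.1 ((tendsto_order.1 hdamp).2 (ε / 2) (by positivity))
  refine eventually_atTop.2 ⟨M + N, fun n hn => ?_⟩
  obtain ⟨k, rfl⟩ := Nat.exists_eq_add_of_le hn
  have hbound : u (M + k + N) ≤
      u N * ∏ j ∈ range (M + k), (1 - b (j + N)) + ∑ j ∈ range (M + k), a (j + N) := by
    simpa only [zero_add] using le_prod_one_sub_mul_add_sum (u := fun m => u (m + N))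
      (fun j => ha (j + N)) (fun j => hb0 (j + N)) (fun j => hb1 (j + N))
      (fun m => by simpa only [add_right_comm] using hu (m + N)) (M + k)
  have htail : ∑ j ∈ range (M + k), a (j + N) ≤ ∑' j, a (j + N) :=
    ((summable_nat_add_iff N).2 hsa).sum_le_tsum _ fun j _ => ha (j + N)
  calc u (M + N + k) = u (M + k + N) := by rw [add_right_comm]
    _ ≤ u N * ∏ j ∈ range (M + k), (1 - b (j + N)) + ∑ j ∈ range (M + k), a (j + N) := hbound
    _ < ε / 2 + ε / 2 := add_lt_add_of_lt_of_le (hM _ (Nat.le_add_right M k)) (htail.trans hN.le)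
    _ = ε := add_halves ε

theorem tsum_ofReal_eq_top_iff_not_summable {ι : Type*} {f : ι → ℝ} (hf : ∀ i, 0 ≤ f i) :
    ∑' i, ENNReal.ofReal (f i) = ⊤ ↔ ¬ Summable f := by
  refine ⟨fun htop hs => hs.tsum_ofReal_ne_top htop, fun hns => by_contra fun hne => hns ?_⟩
  simpa [ENNReal.toReal_ofReal (hf _)] using ENNReal.summable_toReal hne

end RealSequences

section CloudAlgebra

variable {X : Type*}

theorem cloudConv_assoc (μ ν ρ : List X → ℝ) :
    cloudConv (cloudConv μ ν) ρ = cloudConv μ (cloudConv ν ρ) := by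
  funext η
  -- both sides are the sum of `μ (η.take (i+1)) * ν ((η.take (j+1)).drop i) * ρ (η.drop j)`
  -- over `i ≤ j < η.length`
  have hleft : ∀ j ∈ range η.length, cloudConv μ ν (η.take (j + 1)) * ρ (η.drop j) =
      ∑ i ∈ Ico 0 (j + 1), μ (η.take (i + 1)) * (ν ((η.take (j + 1)).drop i) * ρ (η.drop j)) := by
    intro j hj
    rw [cloudConv, List.length_take, min_eq_left (mem_range.1 hj), sum_mul, range_eq_Ico]
    refine sum_congr rfl fun i hi => ?_
    rw [List.take_take, min_eq_left (mem_Ico.1 hi).2, mul_assoc]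
  have hright : ∀ i ∈ range η.length, μ (η.take (i + 1)) * cloudConv ν ρ (η.drop i) =
      ∑ j ∈ Ico i η.length,
        μ (η.take (i + 1)) * (ν ((η.take (j + 1)).drop i) * ρ (η.drop j)) := by
    intro i _
    rw [cloudConv, List.length_drop, mul_sum, sum_Ico_eq_sum_range]
    refine sum_congr rfl fun m _ => ?_
    rw [List.drop_take, List.drop_drop, show i + m + 1 - i = m + 1 by omega]
  rw [cloudConv, cloudConv, sum_congr rfl hleft, sum_congr rfl hright, range_eq_Ico,
    ← sum_Ico_Ico_comm]

theorem cloudI_apply_of_two_le_length (f : X → ℝ) {η : List X} (hη : 2 ≤ η.length) :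
    cloudI f η = 0 := by
  match η, hη with
  | _ :: _ :: _, _ => rfl

theorem cloudBeta_apply_of_three_le_length (f : X → ℝ) {η : List X} (hη : 3 ≤ η.length) :
    cloudBeta f η = 0 := by
  match η, hη with
  | _ :: _ :: _ :: _, _ => rfl

theorem cloudConv_one_left (ν : List X → ℝ) {η : List X} (hη : η ≠ []) :
    cloudConv (cloudI fun _ => 1) ν η = ν η := by
  obtain ⟨x, t, rfl⟩ := List.exists_cons_of_ne_nil hη
  rw [cloudConv, List.length_cons, sum_range_succ']
  have hvanish : ∀ j ∈ range t.length,
      cloudI (fun _ => (1 : ℝ)) ((x :: t).take (j + 1 + 1)) * ν ((x :: t).drop (j + 1)) = 0 :=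
    fun j hj => by
      have hlen : 2 ≤ ((x :: t).take (j + 1 + 1)).length := by simp [mem_range] at hj ⊢; omega
      rw [cloudI_apply_of_two_le_length _ hlen, zero_mul]
  rw [sum_eq_zero hvanish]
  simp [cloudI]

theorem cloudConv_one_right (μ : List X → ℝ) {η : List X} (hη : η ≠ []) :
    cloudConv μ (cloudI fun _ => 1) η = μ η := by
  obtain ⟨ξ, y, rfl⟩ := (List.eq_nil_or_concat' η).resolve_left hη
  rw [cloudConv, List.length_append, List.length_singleton, sum_range_succ]
  have hvanish : ∀ j ∈ range ξ.length,
      μ ((ξ ++ [y]).take (j + 1)) * cloudI (fun _ => (1 : ℝ)) ((ξ ++ [y]).drop j) = 0 :=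
    fun j hj => by
      have hlen : 2 ≤ ((ξ ++ [y]).drop j).length := by simp [mem_range] at hj ⊢; omega
      rw [cloudI_apply_of_two_le_length _ hlen, mul_zero]
  rw [sum_eq_zero hvanish, List.take_of_length_le (by simp), List.drop_left]
  simp [cloudI]

theorem cloudConv_congr_right (μ : List X → ℝ) {ν ν' : List X → ℝ}
    (h : ∀ η ≠ [], ν η = ν' η) (η : List X) : cloudConv μ ν η = cloudConv μ ν' η :=
  sum_congr rfl fun j hj => by
    rw [h _ (List.ne_nil_of_length_pos (by simp [mem_range] at hj ⊢; omega))]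

theorem foldr_cloudConv_apply (l : List (List X → ℝ)) (ν : List X → ℝ) {η : List X}
    (hη : η ≠ []) :
    l.foldr cloudConv ν η = cloudConv (l.foldr cloudConv (cloudI fun _ => 1)) ν η := by
  induction l generalizing η with
  | nil => exact (cloudConv_one_left ν hη).symm
  | cons μ l ih =>
    simp only [List.foldr_cons]
    rw [cloudConv_congr_right μ (fun _ => ih), cloudConv_assoc]

theorem cloudProd_apply_succ {n : ℕ} (νs : Fin (n + 1) → List X → ℝ) {η : List X}
    (hη : η ≠ []) :
    cloudProd νs η = cloudConv (cloudProd fun i => νs i.castSucc) (νs (Fin.last n)) η := by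
  rw [cloudProd, List.ofFn_succ', List.concat_eq_append, List.foldr_append, List.foldr_cons,
    List.foldr_nil, foldr_cloudConv_apply _ _ hη, cloudProd]
  exact cloudConv_congr_right _ (fun _ hξ => cloudConv_one_right _ hξ) η

end CloudAlgebra

section CloudBeta

variable {X : Type*}

theorem cloudConv_cloudBeta_singleton (μ : List X → ℝ) (f : X → ℝ) (x : X) :
    cloudConv μ (cloudBeta f) [x] = (1 - f x) * μ [x] := by
  simp [cloudConv, cloudBeta, mul_comm]

theorem cloudConv_cloudBeta_append_pair (μ : List X → ℝ) (f : X → ℝ) (ξ : List X) (z y : X) :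
    cloudConv μ (cloudBeta f) (ξ ++ [z, y]) = (1 - f y) * μ (ξ ++ [z, y]) + f z * μ (ξ ++ [z]) := by
  have hvanish : ∀ j ∈ range ξ.length,
      μ ((ξ ++ [z, y]).take (j + 1)) * cloudBeta f ((ξ ++ [z, y]).drop j) = 0 := fun j hj => by
    have hlen : 3 ≤ ((ξ ++ [z, y]).drop j).length := by simp [mem_range] at hj ⊢; omega
    rw [cloudBeta_apply_of_three_le_length _ hlen, mul_zero]
  rw [cloudConv, show (ξ ++ [z, y]).length = ξ.length + 1 + 1 by simp, sum_range_succ,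
    sum_range_succ, sum_eq_zero hvanish]
  simp [List.take_append, List.drop_append, List.take_of_length_le, List.drop_eq_nil_of_le,
    add_assoc, cloudBeta]
  ring

theorem cloudConv_nonneg {μ ν : List X → ℝ} (hμ : 0 ≤ μ) (hν : 0 ≤ ν) : 0 ≤ cloudConv μ ν :=
  fun _ => sum_nonneg fun _ _ => mul_nonneg (hμ _) (hν _)

theorem cloudI_nonneg {f : X → ℝ} (hf : 0 ≤ f) : 0 ≤ cloudI f
  | [x] => hf x
  | [] | _ :: _ :: _ => le_rfl

theorem cloudBeta_nonneg {f : X → ℝ} (hf0 : 0 ≤ f) (hf1 : f ≤ 1) : 0 ≤ cloudBeta f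
  | [x] => sub_nonneg.2 (hf1 x)
  | [x, _] => hf0 x
  | [] | _ :: _ :: _ :: _ => le_rfl

theorem cloudProd_nonneg {n : ℕ} {νs : Fin n → List X → ℝ} (hνs : ∀ i, 0 ≤ νs i) :
    0 ≤ cloudProd νs := by
  have hmem : ∀ μ ∈ List.ofFn νs, 0 ≤ μ := by
    simpa [List.mem_ofFn] using hνs
  rw [cloudProd]
  generalize List.ofFn νs = l at hmem
  induction l with
  | nil => exact cloudI_nonneg fun _ => zero_le_one
  | cons μ l ih =>
    rw [List.forall_mem_cons] at hmem
    exact cloudConv_nonneg hmem.1 (ih hmem.2)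

open Classical in
theorem cloudPi_append_singleton (Λ : Set X) (ξ : List X) (y : X) :
    cloudPi Λ (ξ ++ [y]) = if (∀ x ∈ ξ, x ∈ Λ) ∧ y ∉ Λ then 1 else 0 := by
  simp [cloudPi]

end CloudBeta

section CleaningProcess

variable {X : Type*} (h : ℕ → X → ℝ)

def betaProd (n : ℕ) : List X → ℝ :=
  cloudProd fun i : Fin n => cloudBeta (h i)

/-- The mass that has left the marker `ξ ++ [z]` during the first `n` steps. -/
def betaOutflow (n : ℕ) (ξ : List X) (z : X) : ℝ :=
  ∑ j ∈ range n, h j z * betaProd h j (ξ ++ [z])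

theorem betaProd_zero_singleton (x : X) : betaProd h 0 [x] = 1 := rfl

theorem betaProd_zero_append_pair (ξ : List X) (z y : X) : betaProd h 0 (ξ ++ [z, y]) = 0 :=
  cloudI_apply_of_two_le_length _ (by simp)

theorem betaProd_succ_singleton (n : ℕ) (x : X) :
    betaProd h (n + 1) [x] = (1 - h n x) * betaProd h n [x] := by
  rw [betaProd, cloudProd_apply_succ _ (List.cons_ne_nil x []), cloudConv_cloudBeta_singleton]
  rfl

theorem betaProd_succ_append_pair (n : ℕ) (ξ : List X) (z y : X) :
    betaProd h (n + 1) (ξ ++ [z, y]) =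
      (1 - h n y) * betaProd h n (ξ ++ [z, y]) + h n z * betaProd h n (ξ ++ [z]) := by
  rw [betaProd, cloudProd_apply_succ _ (by simp), cloudConv_cloudBeta_append_pair]
  rfl

variable {h}

theorem betaProd_nonneg (h0 : ∀ n x, 0 ≤ h n x) (h1 : ∀ n x, h n x ≤ 1) (n : ℕ) (η : List X) :
    0 ≤ betaProd h n η :=
  cloudProd_nonneg (fun i => cloudBeta_nonneg (h0 i) (h1 i)) η

theorem betaOutflow_nonneg (h0 : ∀ n x, 0 ≤ h n x) (h1 : ∀ n x, h n x ≤ 1) (n : ℕ)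
    (ξ : List X) (z : X) : 0 ≤ betaOutflow h n ξ z :=
  sum_nonneg fun j _ => mul_nonneg (h0 j z) (betaProd_nonneg h0 h1 j _)

theorem betaOutflow_eq_zero {y : X} (hy : ∀ n, h n y = 0) (n : ℕ) (ξ : List X) :
    betaOutflow h n ξ y = 0 :=
  sum_eq_zero fun j _ => by rw [hy, zero_mul]

variable (h)

theorem betaProd_singleton_add_betaOutflow (n : ℕ) (y : X) :
    betaProd h n [y] + betaOutflow h n [] y = 1 := by
  induction n with
  | zero => simp [betaOutflow, betaProd_zero_singleton]
  | succ n ih =>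
    rw [betaProd_succ_singleton, betaOutflow, sum_range_succ, ← betaOutflow, List.nil_append]
    linarith

theorem betaProd_append_pair_add_betaOutflow (n : ℕ) (ξ : List X) (z y : X) :
    betaProd h n (ξ ++ [z, y]) + betaOutflow h n (ξ ++ [z]) y = betaOutflow h n ξ z := by
  induction n with
  | zero => simp [betaOutflow, betaProd_zero_append_pair]
  | succ n ih =>
    simp only [betaOutflow, sum_range_succ, List.append_assoc, List.singleton_append] at ih ⊢
    rw [betaProd_succ_append_pair]
    linarith

end CleaningProcess

section Divergent

variable {X : Type*} {Λ : Set X} {h : ℕ → X → ℝ}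

theorem betaProd_append_eq_zero (hΛ : ∀ n, ∀ x ∉ Λ, h n x = 0) {ξ : List X} {w : X}
    (hw : w ∈ ξ) (hwΛ : w ∉ Λ) (y : X) (n : ℕ) : betaProd h n (ξ ++ [y]) = 0 := by
  induction ξ using List.reverseRecOn generalizing y n with
  | nil => simp at hw
  | append_singleton δ z ih =>
    have hinflow : ∀ j, h j z * betaProd h j (δ ++ [z]) = 0 := fun j => by
      rcases List.mem_append.1 hw with hwδ | hwz
      · rw [ih hwδ, mul_zero]
      · rw [List.mem_singleton.1 hwz] at hwΛ
        rw [hΛ j z hwΛ, zero_mul]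
    rw [List.append_assoc, List.singleton_append]
    induction n with
    | zero => exact betaProd_zero_append_pair h δ z y
    | succ n ihn => rw [betaProd_succ_append_pair, ihn, hinflow, mul_zero, add_zero]

theorem tendsto_betaProd_zero_and_betaOutflow_one (h0 : ∀ n x, 0 ≤ h n x)
    (h1 : ∀ n x, h n x ≤ 1) (hdiv : ∀ x ∈ Λ, ¬ Summable fun n => h n x) (ξ : List X) (z : X)
    (hξ : ∀ w ∈ ξ ++ [z], w ∈ Λ) :
    Tendsto (fun n => betaProd h n (ξ ++ [z])) atTop (nhds 0) ∧
      Tendsto (fun n => betaOutflow h n ξ z) atTop (nhds 1) := by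
  have hz : ¬ Summable fun n => h n z := hdiv z (hξ z (by simp))
  induction ξ using List.reverseRecOn generalizing z with
  | nil =>
    have hdecay : Tendsto (fun n => betaProd h n [z]) atTop (nhds 0) :=
      tendsto_zero_of_le_one_sub_mul_add (a := 0) (fun n => betaProd_nonneg h0 h1 n _)
        (fun _ => le_rfl) (h0 · z) (h1 · z)
        (fun n => by simp [betaProd_succ_singleton]) summable_zero hz
    refine ⟨hdecay, ?_⟩
    have hout : ∀ n, betaOutflow h n [] z = 1 - betaProd h n [z] := fun n => by
      linarith [betaProd_singleton_add_betaOutflow h n z]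
    simpa [hout] using hdecay.const_sub 1
  | append_singleton γ b ih =>
    obtain ⟨-, hinflow⟩ :=
      ih b (fun w hw => hξ w (by simp at hw ⊢; tauto)) (hdiv b (hξ b (by simp)))
    have hsum : HasSum (fun n => h n b * betaProd h n (γ ++ [b])) 1 :=
      (hasSum_iff_tendsto_nat_of_nonneg
        (fun n => mul_nonneg (h0 n b) (betaProd_nonneg h0 h1 n _)) 1).2 hinflow
    simp only [List.append_assoc, List.singleton_append]
    have hdecay : Tendsto (fun n => betaProd h n (γ ++ [b, z])) atTop (nhds 0) :=
      tendsto_zero_of_le_one_sub_mul_add (fun n => betaProd_nonneg h0 h1 n _)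
        (fun n => mul_nonneg (h0 n b) (betaProd_nonneg h0 h1 n _)) (h0 · z) (h1 · z)
        (fun n => (betaProd_succ_append_pair h n γ b z).le) hsum.summable hz
    refine ⟨hdecay, ?_⟩
    have hout : ∀ n,
        betaOutflow h n (γ ++ [b]) z = betaOutflow h n γ b - betaProd h n (γ ++ [b, z]) :=
      fun n => by linarith [betaProd_append_pair_add_betaOutflow h n γ b z]
    simpa [hout] using hinflow.sub hdecay

theorem tendsto_betaProd_boundary (h0 : ∀ n x, 0 ≤ h n x) (h1 : ∀ n x, h n x ≤ 1)
    (hΛ : ∀ n, ∀ x ∉ Λ, h n x = 0) (hdiv : ∀ x ∈ Λ, ¬ Summable fun n => h n x) {ξ : List X}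
    (hξ : ∀ w ∈ ξ, w ∈ Λ) {y : X} (hy : y ∉ Λ) :
    Tendsto (fun n => betaProd h n (ξ ++ [y])) atTop (nhds 1) := by
  have hout : ∀ n ζ, betaOutflow h n ζ y = 0 := betaOutflow_eq_zero (hΛ · y hy)
  rcases List.eq_nil_or_concat' ξ with rfl | ⟨δ, z, rfl⟩
  · have hconst : ∀ n, betaProd h n [y] = 1 := fun n => by
      simpa [hout] using betaProd_singleton_add_betaOutflow h n y
    simp [hconst]
  · have hinflow : ∀ n, betaProd h n (δ ++ [z] ++ [y]) = betaOutflow h n δ z := fun n => by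
      simpa [hout] using betaProd_append_pair_add_betaOutflow h n δ z y
    simpa only [hinflow] using (tendsto_betaProd_zero_and_betaOutflow_one h0 h1 hdiv δ z hξ).2

theorem tendsto_betaProd_cloudPi (h0 : ∀ n x, 0 ≤ h n x) (h1 : ∀ n x, h n x ≤ 1)
    (hΛ : ∀ n, ∀ x ∉ Λ, h n x = 0) (hdiv : ∀ x ∈ Λ, ¬ Summable fun n => h n x) {η : List X}
    (hη : η ≠ []) : Tendsto (fun n => betaProd h n η) atTop (nhds (cloudPi Λ η)) := by
  obtain ⟨ξ, y, rfl⟩ := (List.eq_nil_or_concat' η).resolve_left hη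
  rw [cloudPi_append_singleton]
  by_cases hξ : ∀ w ∈ ξ, w ∈ Λ
  · by_cases hy : y ∈ Λ
    · rw [if_neg fun h => h.2 hy]
      exact (tendsto_betaProd_zero_and_betaOutflow_one h0 h1 hdiv ξ y
        (by simpa [or_imp, forall_and] using ⟨hξ, hy⟩)).1
    · rw [if_pos ⟨hξ, hy⟩]
      exact tendsto_betaProd_boundary h0 h1 hΛ hdiv hξ hy
  · obtain ⟨w, hw, hwΛ⟩ : ∃ w ∈ ξ, w ∉ Λ := by simpa using hξ
    rw [if_neg fun h => hwΛ (h.1 w hw)]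
    simp [betaProd_append_eq_zero hΛ hw hwΛ]

end Divergent

section Convergent

variable {X : Type*} (h : ℕ → X → ℝ)

theorem sum_betaProd_replicate_add_betaOutflow (n M : ℕ) (x : X) :
    ∑ k ∈ range (M + 1), betaProd h n (List.replicate (k + 1) x) +
      betaOutflow h n (List.replicate M x) x = 1 := by
  induction M with
  | zero => simpa using betaProd_singleton_add_betaOutflow h n x
  | succ M ih =>
    have hstep := betaProd_append_pair_add_betaOutflow h n (List.replicate M x) x x
    rw [← List.replicate_succ', show [x, x] = [x] ++ [x] from rfl, ← List.append_assoc,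
      ← List.replicate_succ', ← List.replicate_succ'] at hstep
    rw [sum_range_succ]
    linarith

variable {h}

theorem betaOutflow_replicate_succ_le (h0 : ∀ n x, 0 ≤ h n x) (h1 : ∀ n x, h n x ≤ 1)
    (n m : ℕ) (x : X) :
    betaOutflow h n (List.replicate (m + 1) x) x ≤ betaOutflow h n (List.replicate m x) x := by
  have hstep := betaProd_append_pair_add_betaOutflow h n (List.replicate m x) x x
  rw [← List.replicate_succ'] at hstep
  linarith [betaProd_nonneg h0 h1 n (List.replicate m x ++ [x, x])]

/-- Markov's inequality: along `(x, x, …)` the expected number of jumps in `n` steps is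
`∑ j < n, h j x`. -/
theorem succ_mul_betaOutflow_replicate_le (h0 : ∀ n x, 0 ≤ h n x) (h1 : ∀ n x, h n x ≤ 1)
    (n M : ℕ) (x : X) :
    (M + 1) * betaOutflow h n (List.replicate M x) x ≤ ∑ j ∈ range n, h j x := by
  have hanti : Antitone fun m => betaOutflow h n (List.replicate m x) x :=
    antitone_nat_of_succ_le fun m => betaOutflow_replicate_succ_le h0 h1 n m x
  calc (M + 1) * betaOutflow h n (List.replicate M x) x
      = ∑ m ∈ range (M + 1), betaOutflow h n (List.replicate M x) x := by simp
    _ ≤ ∑ m ∈ range (M + 1), betaOutflow h n (List.replicate m x) x :=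
        sum_le_sum fun m hm => hanti (Nat.lt_succ_iff.1 (mem_range.1 hm))
    _ = ∑ j ∈ range n, h j x * ∑ k ∈ range (M + 1), betaProd h j (List.replicate (k + 1) x) := by
        simp only [betaOutflow, mul_sum, ← List.replicate_succ']
        exact sum_comm
    _ ≤ ∑ j ∈ range n, h j x := by
        refine sum_le_sum fun j _ => mul_le_of_le_one_right (h0 j x) ?_
        linarith [sum_betaProd_replicate_add_betaOutflow h j M x,
          betaOutflow_nonneg h0 h1 j (List.replicate M x) x]

theorem not_summable_of_tendsto_betaProd_replicate (h0 : ∀ n x, 0 ≤ h n x)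
    (h1 : ∀ n x, h n x ≤ 1) {x : X}
    (hx : ∀ k, Tendsto (fun n => betaProd h n (List.replicate (k + 1) x)) atTop (nhds 0)) :
    ¬ Summable fun n => h n x := by
  intro hsum
  obtain ⟨M, hM⟩ := exists_nat_ge (2 * ∑' n, h n x)
  have hmass : Tendsto (fun n => ∑ k ∈ range (M + 1), betaProd h n (List.replicate (k + 1) x))
      atTop (nhds 0) := by
    simpa using tendsto_finsetSum (range (M + 1)) fun k _ => hx k
  have hlower : ∀ n, 1 / 2 ≤ ∑ k ∈ range (M + 1), betaProd h n (List.replicate (k + 1) x) := by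
    intro n
    have hmarkov := succ_mul_betaOutflow_replicate_le h0 h1 n M x
    have htsum := hsum.sum_le_tsum (range n) fun j _ => h0 j x
    have hout : betaOutflow h n (List.replicate M x) x ≤ 1 / 2 := by
      rw [← mul_le_mul_iff_right₀ (by positivity : (0 : ℝ) < M + 1)]
      linarith
    linarith [sum_betaProd_replicate_add_betaOutflow h n M x]
  linarith [ge_of_tendsto' hmass hlower]

end Convergent

/-- Pointwise cleaning criterion: for `0 ≤ hₙ ≤ χ_Λ`, the products
`μₙ = β_{h₁} * ⋯ * β_{hₙ}` converge markerwise to `π_Λ` iff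
`Σ_n hₙ(x) = ∞` for every `x ∈ Λ`. -/
theorem pointwise_cleaning_criterion {X : Type*} (Λ : Set X) (h : ℕ → X → ℝ)
    (hh : ∀ n x, 0 ≤ h n x ∧ h n x ≤ Λ.indicator 1 x) :
    (∀ η : List X, η ≠ [] →
        Filter.Tendsto (fun n : ℕ => cloudProd (fun i : Fin n => cloudBeta (h i)) η)
          Filter.atTop (nhds (cloudPi Λ η)))
    ↔ ∀ x ∈ Λ, ∑' n : ℕ, ENNReal.ofReal (h n x) = ⊤ := by
  have h0 : ∀ n x, 0 ≤ h n x := fun n x => (hh n x).1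
  have h1 : ∀ n x, h n x ≤ 1 := fun n x =>
    (hh n x).2.trans (Set.indicator_apply_le' (fun _ => le_rfl) fun _ => zero_le_one)
  have hΛ : ∀ n, ∀ x ∉ Λ, h n x = 0 := fun n x hx =>
    le_antisymm ((hh n x).2.trans_eq (Set.indicator_of_notMem hx _)) (h0 n x)
  simp_rw [tsum_ofReal_eq_top_iff_not_summable (h0 · _)]
  refine ⟨fun hconv x hx => not_summable_of_tendsto_betaProd_replicate h0 h1 fun k => ?_,
    fun hdiv η hη => tendsto_betaProd_cloudPi h0 h1 hΛ hdiv hη⟩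
  have hπ : cloudPi Λ (List.replicate (k + 1) x) = 0 := by
    rw [List.replicate_succ', cloudPi_append_singleton, if_neg fun h => h.2 hx]
  exact hπ ▸ hconv (List.replicate (k + 1) x) List.replicate_succ_ne_nil
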